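/- Let E be a finite set and L ⊆ V_E a Lagrangian subspace. Then ν_E(L) is a binary delta-matroid on E: there exist a symmetric E×E matrix A over 𝔽₂ and a subset E' ⊆ E such that the feasible sets of ν_E(L) are exactly {U Δ E' : U ⊆ E, A|_U invertible}. In particular, ν_E(L) is a proper set system satisfying the symmetric exchange axiom. -/

import Mathlib

open Finset
open scoped symmDiff

variable {E : Type*} [Fintype E] [DecidableEq E]

/-- The symplectic vector space `V_E = (E → 𝔽₂) × (E → 𝔽₂)`. -/
abbrev V (E : Type*) : Type _ := (E → ZMod 2) × (E → ZMod 2)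

/-- Basis vector `e`. -/
def baseV (e : E) : V E := (Pi.single e 1, 0)

/-- Basis vector `e^∨`. -/
def dualV (e : E) : V E := (0, Pi.single e 1)

/-- The symplectic form on `V E`. -/
def omegaForm (u v : V E) : ZMod 2 := ∑ e, (u.1 e * v.2 e + u.2 e * v.1 e)

/-- A subspace is Lagrangian if the form vanishes on it and its dimension is `|E|`. -/
def IsLagrangian (L : Submodule (ZMod 2) (V E)) : Prop :=
  (∀ u ∈ L, ∀ v ∈ L, omegaForm u v = 0) ∧
    Module.finrank (ZMod 2) L = Fintype.card E

/-- The span of `{e^∨ : e ∈ Y} ∪ {e : e ∈ E \ Y}`. -/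
def coordSpan (Y : Finset E) : Submodule (ZMod 2) (V E) :=
  Submodule.span (ZMod 2)
    ((fun e => dualV e) '' (Y : Set E) ∪ (fun e => baseV e) '' ((Yᶜ : Finset E) : Set E))

/-- `Y` is feasible for `L` iff `L ∩ ⟨Y^∨ ⊔ (E \ Y)⟩ = 0`. -/
def Feasible (L : Submodule (ZMod 2) (V E)) (Y : Finset E) : Prop :=
  L ⊓ coordSpan Y = ⊥

/-- The set system `ν_E(L)`. -/
def nu (L : Submodule (ZMod 2) (V E)) : Set (Finset E) := {Y | Feasible L Y}

/-- The nondegeneracy set system of a matrix `A`. -/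
def Phi (A : Matrix E E (ZMod 2)) : Set (Finset E) :=
  {U : Finset E | IsUnit (A.submatrix (fun i : ↥U => (i : E)) (fun j : ↥U => (j : E))).det}

/-- The symmetric exchange axiom. -/
def SEAxiom (Φ : Set (Finset E)) : Prop :=
  ∀ φ₁ ∈ Φ, ∀ φ₂ ∈ Φ, ∀ e ∈ φ₁ ∆ φ₂, ∃ e' ∈ φ₁ ∆ φ₂, φ₁ ∆ ({e, e'} : Finset E) ∈ Φ

/-- Binary delta-matroid: a twist of a nondegeneracy set system. -/
def IsBinaryDM (Φ : Set (Finset E)) : Prop :=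
  ∃ (A : Matrix E E (ZMod 2)) (E' : Finset E), A.IsSymm ∧ Φ = (· ∆ E') '' Phi A

/-- The involution `σ_e` swapping `e` and `e^∨`. -/
def sigmaE (e : E) : V E →ₗ[ZMod 2] V E where
  toFun u := (fun f => if f = e then u.2 f else u.1 f, fun f => if f = e then u.1 f else u.2 f)
  map_add' u v := by ext f <;> dsimp <;> split <;> rfl
  map_smul' c u := by ext f <;> dsimp <;> split <;> rfl

/-- Composition of the `σ_e` over `e ∈ E'`. -/
def sigmaSet (E' : Finset E) : V E →ₗ[ZMod 2] V E where
  toFun u := (fun f => if f ∈ E' then u.2 f else u.1 f, fun f => if f ∈ E' then u.1 f else u.2 f)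
  map_add' u v := by ext f <;> dsimp <;> split <;> rfl
  map_smul' c u := by ext f <;> dsimp <;> split <;> rfl

/-- A Lagrangian subspace is graphic if for every `e` there is `v_e ∈ L` with
`ω(v_e,e)=1` and `ω(v_e,e')=0` for `e' ≠ e`. -/
def IsGraphic (L : Submodule (ZMod 2) (V E)) : Prop :=
  ∀ e : E, ∃ v ∈ L, omegaForm v (baseV e) = 1 ∧
    ∀ e' : E, e' ≠ e → omegaForm v (baseV e') = 0

/-- The vector `e^∨ + Σ_{e'} A_{e,e'} e'`. -/
def rowVec (A : Matrix E E (ZMod 2)) (e : E) : V E := (A e, Pi.single e 1)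

/-- The subspace spanned by the vectors `rowVec A e`, `e ∈ E`. -/
def graphOf (A : Matrix E E (ZMod 2)) : Submodule (ZMod 2) (V E) :=
  Submodule.span (ZMod 2) (Set.range (rowVec A))

/-- The first Vassiliev move: `e^∨ ↦ e^∨ + e'`, `e'^∨ ↦ e'^∨ + e`, fixing other basis vectors. -/
def vassiliev1 (e e' : E) : V E →ₗ[ZMod 2] V E where
  toFun u := (fun f => u.1 f + (if f = e' then u.2 e else 0) + (if f = e then u.2 e' else 0), u.2)
  map_add' u v := by ext f <;> dsimp <;> split_ifs <;> ring
  map_smul' c u := by ext f <;> dsimp <;> split_ifs <;> ring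

/-!
Swapping `e` and `e^∨` for all `e ∈ Y₀` is a symplectic involution carrying `coordSpan Y`
onto `coordSpan (Y ∆ Y₀)`, so it twists `ν_E(L)` by `Y₀`. A feasible `Y₀` exists: if
`0 ≠ v ∈ L ∩ coordSpan Y`, flipping a coordinate `e` at which `v` is nonzero strictly shrinks
this intersection, because every vector of the new intersection is `ω`-orthogonal to `v`.
Twisting by a feasible `Y₀` yields a Lagrangian meeting `coordSpan ∅ = span {e : e ∈ E}`
trivially; it therefore projects isomorphically onto the dual coordinates and is the graph
`{(c A, c)}` of a matrix `A`, symmetric by isotropy. A vector `(c A, c)` lies in `coordSpan U`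
iff `c` is a left kernel vector of `A[U]`, so feasibility becomes invertibility of principal
submatrices. Symmetric exchange then reduces to a principal minor of size one or two: if `A[U]`
is invertible and `e ∈ U`, either `A e e ≠ 0` or `A e e' ≠ 0` for some `e' ∈ U`, and then
`A[{e, e'}]` is invertible.
-/

open Matrix

theorem mem_coordSpan {Y : Finset E} {v : V E} :
    v ∈ coordSpan Y ↔ (∀ e ∈ Y, v.1 e = 0) ∧ ∀ e ∉ Y, v.2 e = 0 := by
  constructor
  · intro hv
    refine Submodule.span_induction
      (p := fun v _ => (∀ e ∈ Y, v.1 e = 0) ∧ ∀ e ∉ Y, v.2 e = 0) ?_ ?_ ?_ ?_ hv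
    · rintro _ (⟨e, he, rfl⟩ | ⟨e, he, rfl⟩)
      · exact ⟨fun f _ => rfl, fun f hf => Pi.single_eq_of_ne (by rintro rfl; exact hf he) 1⟩
      · simp only [coe_compl, Set.mem_compl_iff, mem_coe] at he
        exact ⟨fun f hf => Pi.single_eq_of_ne (by rintro rfl; exact he hf) 1, fun f _ => rfl⟩
    · simp
    · intro _ _ _ _ hu hw
      exact ⟨fun e he => by simp [hu.1 e he, hw.1 e he],
        fun e he => by simp [hu.2 e he, hw.2 e he]⟩
    · intro c _ _ hu
      exact ⟨fun e he => by simp [hu.1 e he], fun e he => by simp [hu.2 e he]⟩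
  · rintro ⟨hv₁, hv₂⟩
    have hv : v = ∑ e, (v.1 e • baseV e + v.2 e • dualV e) := by
      ext f <;> simp [baseV, dualV, Prod.fst_sum, Prod.snd_sum, Pi.single_apply]
    rw [hv]
    refine Submodule.sum_mem _ fun e _ => Submodule.add_mem _ ?_ ?_ <;> by_cases he : e ∈ Y
    · simp [hv₁ e he]
    · exact Submodule.smul_mem _ _ (Submodule.subset_span (Or.inr ⟨e, by simpa using he, rfl⟩))
    · exact Submodule.smul_mem _ _ (Submodule.subset_span (Or.inl ⟨e, he, rfl⟩))
    · simp [hv₂ e he]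

omit [Fintype E] in
@[simp]
theorem sigmaSet_apply (Y : Finset E) (v : V E) :
    sigmaSet Y v =
      (fun f => if f ∈ Y then v.2 f else v.1 f, fun f => if f ∈ Y then v.1 f else v.2 f) :=
  rfl

omit [Fintype E] in
theorem sigmaSet_sigmaSet (Y Y' : Finset E) (v : V E) :
    sigmaSet Y (sigmaSet Y' v) = sigmaSet (Y ∆ Y') v := by
  ext f <;> by_cases hY : f ∈ Y <;> by_cases hY' : f ∈ Y' <;> simp [mem_symmDiff, hY, hY']

omit [Fintype E] in
theorem sigmaSet_involutive (Y : Finset E) : Function.Involutive (sigmaSet Y) := fun v => by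
  ext f <;> by_cases hY : f ∈ Y <;> simp [hY]

theorem omegaForm_sigmaSet (Y : Finset E) (u v : V E) :
    omegaForm (sigmaSet Y u) (sigmaSet Y v) = omegaForm u v :=
  Finset.sum_congr rfl fun f _ => by by_cases hf : f ∈ Y <;> simp [hf, add_comm]

theorem mem_coordSpan_iff_sigmaSet {Y : Finset E} {v : V E} :
    v ∈ coordSpan Y ↔ (sigmaSet Y v).2 = 0 := by
  rw [mem_coordSpan, funext_iff]
  refine ⟨fun hv f => ?_, fun hv => ⟨fun f hf => ?_, fun f hf => ?_⟩⟩
  · by_cases hf : f ∈ Y <;> simp [hf, hv.1, hv.2]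
  · simpa [hf] using hv f
  · simpa [hf] using hv f

theorem feasible_iff {L : Submodule (ZMod 2) (V E)} {Y : Finset E} :
    Feasible L Y ↔ ∀ v ∈ L, (sigmaSet Y v).2 = 0 → v = 0 := by
  simp only [Feasible, Submodule.eq_bot_iff, Submodule.mem_inf, and_imp, mem_coordSpan_iff_sigmaSet]

theorem feasible_map_sigmaSet (L : Submodule (ZMod 2) (V E)) (Y Y' : Finset E) :
    Feasible (L.map (sigmaSet Y')) Y ↔ Feasible L (Y ∆ Y') := by
  simp only [feasible_iff, Submodule.mem_map, forall_exists_index, and_imp,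
    forall_apply_eq_imp_iff₂, sigmaSet_sigmaSet,
    (sigmaSet_involutive Y').injective.eq_iff' (map_zero _)]

theorem isLagrangian_map_sigmaSet {L : Submodule (ZMod 2) (V E)} (hL : IsLagrangian L)
    (Y : Finset E) : IsLagrangian (L.map (sigmaSet Y)) := by
  refine ⟨?_, ?_⟩
  · rintro _ ⟨u, hu, rfl⟩ _ ⟨v, hv, rfl⟩
    rw [omegaForm_sigmaSet]
    exact hL.1 u hu v hv
  · rw [← hL.2]
    exact LinearEquiv.finrank_map_eq (LinearEquiv.ofInvolutive _ (sigmaSet_involutive Y)) L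

theorem graphOf_eq_range (A : Matrix E E (ZMod 2)) :
    graphOf A = LinearMap.range ((vecMulLinear A).prod LinearMap.id) := by
  have hrow : rowVec A = (vecMulLinear A).prod LinearMap.id ∘ Pi.basisFun (ZMod 2) E := by
    funext e
    ext f <;> simp [rowVec]
  rw [graphOf, hrow, Set.range_comp, ← Submodule.map_span, Module.Basis.span_eq,
    LinearMap.range_eq_map]

theorem mem_graphOf {A : Matrix E E (ZMod 2)} {v : V E} : v ∈ graphOf A ↔ v.1 = v.2 ᵥ* A := by
  rw [graphOf_eq_range, LinearMap.mem_range]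
  constructor
  · rintro ⟨c, rfl⟩
    rfl
  · intro hv
    exact ⟨v.2, Prod.ext hv.symm rfl⟩

theorem vecMul_submatrix_of_support_subset {K ι : Type*} [CommSemiring K] [Fintype ι]
    (A : Matrix ι ι K) (U : Finset ι) {c : ι → K} (hc : ∀ i ∉ U, c i = 0) :
    (fun i : U => c i) ᵥ* A.submatrix (↑) (↑) = fun j : U => (c ᵥ* A) j := by
  funext j
  simp only [vecMul, dotProduct, submatrix_apply]
  rw [Finset.sum_coe_sort U (fun i => c i * A i j)]
  exact Finset.sum_subset (Finset.subset_univ U) fun i _ hi => by rw [hc i hi, zero_mul]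

theorem isUnit_det_submatrix_iff {K ι : Type*} [Field K] [Fintype ι] [DecidableEq ι]
    (A : Matrix ι ι K) (U : Finset ι) :
    IsUnit (A.submatrix (fun i : U => (i : ι)) (fun j : U => (j : ι))).det ↔
      ∀ c : ι → K, (∀ i ∉ U, c i = 0) → (∀ j ∈ U, (c ᵥ* A) j = 0) → c = 0 := by
  rw [isUnit_iff_ne_zero, Ne, ← exists_vecMul_eq_zero_iff]
  constructor
  · intro h c hc hcA
    have hcU : (fun i : U => c i) = 0 := by
      by_contra hne
      refine h ⟨_, hne, ?_⟩
      rw [vecMul_submatrix_of_support_subset A U hc]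
      exact funext fun j => hcA j j.2
    funext i
    by_cases hi : i ∈ U
    · exact congrFun hcU ⟨i, hi⟩
    · exact hc i hi
  · rintro h ⟨c', hc'0, hc'⟩
    set c : ι → K := fun i => if hi : i ∈ U then c' ⟨i, hi⟩ else 0
    have hc : ∀ i ∉ U, c i = 0 := fun i hi => dif_neg hi
    have hcc' : (fun i : U => c i) = c' := funext fun i => dif_pos i.2
    rw [← hcc', vecMul_submatrix_of_support_subset A U hc] at hc'
    have hc0 : c = 0 := h c hc fun j hj => congrFun hc' ⟨j, hj⟩
    apply hc'0
    rw [← hcc', hc0]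
    rfl

theorem feasible_graphOf_iff_mem_Phi {A : Matrix E E (ZMod 2)} {U : Finset E} :
    Feasible (graphOf A) U ↔ U ∈ Phi A := by
  rw [Phi, Set.mem_ofPred_eq, isUnit_det_submatrix_iff, Feasible, Submodule.eq_bot_iff]
  simp only [Submodule.mem_inf, mem_graphOf, mem_coordSpan, and_imp]
  constructor
  · intro h c hc hcA
    exact congrArg Prod.snd (h (c ᵥ* A, c) rfl hcA hc)
  · intro h v hv hv₁ hv₂
    have hc := h v.2 hv₂ (hv ▸ hv₁)
    ext : 1 <;> simp [hv, hc]

theorem exists_pair_mem_Phi {A : Matrix E E (ZMod 2)} (hA : A.IsSymm) {U : Finset E}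
    (hU : U ∈ Phi A) {e : E} (he : e ∈ U) : ∃ e' ∈ U, ({e, e'} : Finset E) ∈ Phi A := by
  simp only [Phi, Set.mem_ofPred_eq, isUnit_det_submatrix_iff] at hU ⊢
  by_cases hee : A e e = 0
  · obtain ⟨e', he', hee'⟩ : ∃ e' ∈ U, A e e' ≠ 0 := by
      by_contra! h
      have hsingle := hU (Pi.single e 1)
        (fun i hi => Pi.single_eq_of_ne (by rintro rfl; exact hi he) 1)
        fun j hj => by simp [single_vecMul, h j hj]
      simpa using congrFun hsingle e
    have hne : e ≠ e' := by rintro rfl; exact hee' hee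
    refine ⟨e', he', fun c hc hcA => ?_⟩
    have hvecMul : ∀ j, (c ᵥ* A) j = c e * A e j + c e' * A e' j := fun j => by
      rw [vecMul, dotProduct, ← Finset.sum_pair (f := fun i => c i * A i j) hne]
      exact (Finset.sum_subset (Finset.subset_univ _) fun i _ hi => by rw [hc i hi, zero_mul]).symm
    have hce' : c e' = 0 := by
      have := hcA e (by simp)
      rwa [hvecMul, hee, mul_zero, zero_add, hA.apply e e', mul_eq_zero, or_iff_left hee'] at this
    have hce : c e = 0 := by
      have := hcA e' (by simp)
      rwa [hvecMul, hce', zero_mul, add_zero, mul_eq_zero, or_iff_left hee'] at this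
    funext i
    by_cases hi : i = e
    · rw [hi, hce]; rfl
    by_cases hi' : i = e'
    · rw [hi', hce']; rfl
    exact hc i (by simp [hi, hi'])
  · refine ⟨e, he, fun c hc hcA => ?_⟩
    simp only [Finset.pair_eq_singleton, Finset.mem_singleton] at hc hcA
    have hce : c e = 0 := by
      have := hcA e rfl
      rw [vecMul, dotProduct, Finset.sum_eq_single e (fun i _ hi => by rw [hc i hi, zero_mul])
        (by simp)] at this
      exact (mul_eq_zero.1 this).resolve_right hee
    funext i
    by_cases hi : i = e
    · rw [hi, hce]; rfl
    · exact hc i hi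

theorem omegaForm_rowVec (A : Matrix E E (ZMod 2)) (e f : E) :
    omegaForm (rowVec A e) (rowVec A f) = A e f + A f e := by
  simp [omegaForm, rowVec, Finset.sum_add_distrib, Pi.single_apply]

theorem exists_isSymm_eq_graphOf {L : Submodule (ZMod 2) (V E)} (hL : IsLagrangian L)
    (h : Feasible L ∅) : ∃ A : Matrix E E (ZMod 2), A.IsSymm ∧ L = graphOf A := by
  have hsnd : ∀ v ∈ L, v.2 = 0 → v = 0 := by simpa [feasible_iff] using h
  set π := (LinearMap.snd (ZMod 2) (E → ZMod 2) (E → ZMod 2)).comp L.subtype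
  have hπ : Function.Surjective π := by
    refine (LinearMap.injective_iff_surjective_of_finrank_eq_finrank (by simp [hL.2])).1 ?_
    rw [← LinearMap.ker_eq_bot, Submodule.eq_bot_iff]
    exact fun v hv => Subtype.ext (hsnd v v.2 hv)
  choose r hr using fun e => hπ (Pi.single e 1)
  set A : Matrix E E (ZMod 2) := fun e => (r e : V E).1
  have hrow : ∀ e, rowVec A e ∈ L := fun e => by
    convert (r e).2
    exact Prod.ext rfl (hr e).symm
  have hle : graphOf A ≤ L := Submodule.span_le.2 (Set.range_subset_iff.2 hrow)
  refine ⟨A, ?_, le_antisymm (fun v hv => ?_) hle⟩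
  · ext e f
    rw [transpose_apply, ← CharTwo.add_eq_zero, ← omegaForm_rowVec]
    exact hL.1 _ (hrow f) _ (hrow e)
  · have hw : (v.2 ᵥ* A, v.2) ∈ L := hle (mem_graphOf.2 rfl)
    have hvw : v = (v.2 ᵥ* A, v.2) := sub_eq_zero.1 (hsnd _ (L.sub_mem hv hw) (by simp))
    rw [hvw]
    exact mem_graphOf.2 rfl

theorem mem_coordSpan_symmDiff_singleton_iff {Y : Finset E} {e : E} {v : V E}
    (hv : v ∈ coordSpan Y) : v ∈ coordSpan (Y ∆ {e}) ↔ v.1 e = 0 ∧ v.2 e = 0 := by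
  rw [mem_coordSpan] at hv ⊢
  have hmem : ∀ g ≠ e, (g ∈ Y ∆ {e} ↔ g ∈ Y) := fun g hg => by simp [mem_symmDiff, hg]
  constructor
  · rintro ⟨hv₁, hv₂⟩
    by_cases he : e ∈ Y
    · exact ⟨hv.1 e he, hv₂ e (by simp [mem_symmDiff, he])⟩
    · exact ⟨hv₁ e (by simp [mem_symmDiff, he]), hv.2 e he⟩
  · rintro ⟨he₁, he₂⟩
    refine ⟨fun g hg => ?_, fun g hg => ?_⟩ <;> by_cases hge : g = e
    · exact hge ▸ he₁
    · exact hv.1 g ((hmem g hge).1 hg)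
    · exact hge ▸ he₂
    · exact hv.2 g (mt (hmem g hge).2 hg)

theorem omegaForm_of_mem_coordSpan_symmDiff_singleton {Y : Finset E} {e : E} {v w : V E}
    (hv : v ∈ coordSpan Y) (hw : w ∈ coordSpan (Y ∆ {e})) :
    omegaForm v w = v.1 e * w.2 e + v.2 e * w.1 e := by
  rw [mem_coordSpan] at hv hw
  rw [omegaForm, Finset.sum_eq_single e _ (by simp)]
  intro g _ hg
  have hmem : g ∈ Y ∆ {e} ↔ g ∈ Y := by simp [mem_symmDiff, hg]
  by_cases hgY : g ∈ Y
  · rw [hv.1 g hgY, hw.1 g (hmem.2 hgY), zero_mul, zero_add, mul_zero]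
  · rw [hv.2 g hgY, hw.2 g (mt hmem.1 hgY), mul_zero, zero_mul, add_zero]

theorem inf_coordSpan_symmDiff_singleton_lt {L : Submodule (ZMod 2) (V E)}
    (hiso : ∀ u ∈ L, ∀ v ∈ L, omegaForm u v = 0) {Y : Finset E} {e : E} {v : V E}
    (hv : v ∈ L ⊓ coordSpan Y) (hve : v ∉ coordSpan (Y ∆ {e})) :
    L ⊓ coordSpan (Y ∆ {e}) < L ⊓ coordSpan Y := by
  refine lt_of_le_of_ne (fun w hw => ⟨hw.1, ?_⟩) fun h => hve (h ▸ hv).2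
  have hω := hiso v hv.1 w hw.1
  rw [omegaForm_of_mem_coordSpan_symmDiff_singleton hv.2 hw.2] at hω
  rw [mem_coordSpan_symmDiff_singleton_iff hv.2] at hve
  have hwY := mem_coordSpan_symmDiff_singleton_iff (e := e) hw.2
  rw [symmDiff_symmDiff_cancel_right] at hwY
  refine hwY.2 ?_
  by_cases he : e ∈ Y
  · have hv₁ : v.1 e = 0 := (mem_coordSpan.1 hv.2).1 e he
    have hw₂ : w.2 e = 0 := (mem_coordSpan.1 hw.2).2 e (by simp [mem_symmDiff, he])
    rw [hv₁, zero_mul, zero_add, mul_eq_zero, or_iff_right fun h => hve ⟨hv₁, h⟩] at hω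
    exact ⟨hω, hw₂⟩
  · have hv₂ : v.2 e = 0 := (mem_coordSpan.1 hv.2).2 e he
    have hw₁ : w.1 e = 0 := (mem_coordSpan.1 hw.2).1 e (by simp [mem_symmDiff, he])
    rw [hv₂, zero_mul, add_zero, mul_eq_zero, or_iff_right fun h => hve ⟨h, hv₂⟩] at hω
    exact ⟨hw₁, hω⟩

theorem exists_feasible {L : Submodule (ZMod 2) (V E)}
    (hiso : ∀ u ∈ L, ∀ v ∈ L, omegaForm u v = 0) : ∃ Y, Feasible L Y := by
  obtain ⟨Y, -, hY⟩ := Finset.exists_min_image Finset.univ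
    (fun Y => Module.finrank (ZMod 2) ↥(L ⊓ coordSpan Y)) Finset.univ_nonempty
  refine ⟨Y, by_contra fun hne => ?_⟩
  obtain ⟨v, hv, hv0⟩ := Submodule.exists_mem_ne_zero_of_ne_bot hne
  obtain ⟨e, he⟩ : ∃ e, v ∉ coordSpan (Y ∆ {e}) := by
    by_contra! h
    simp only [mem_coordSpan_symmDiff_singleton_iff hv.2] at h
    exact hv0 (Prod.ext (funext fun e => (h e).1) (funext fun e => (h e).2))
  exact (Submodule.finrank_lt_finrank_of_lt (inf_coordSpan_symmDiff_singleton_lt hiso hv he)).not_ge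
    (hY _ (Finset.mem_univ _))

theorem exists_isSymm_feasible_iff_mem_Phi {L : Submodule (ZMod 2) (V E)} (hL : IsLagrangian L)
    {Y₀ : Finset E} (hY₀ : Feasible L Y₀) :
    ∃ A : Matrix E E (ZMod 2), A.IsSymm ∧ ∀ Y, Feasible L Y ↔ Y ∆ Y₀ ∈ Phi A := by
  obtain ⟨A, hA, hLA⟩ := exists_isSymm_eq_graphOf (isLagrangian_map_sigmaSet hL Y₀)
    (by rwa [feasible_map_sigmaSet, ← Finset.bot_eq_empty, bot_symmDiff])
  refine ⟨A, hA, fun Y => ?_⟩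
  rw [← feasible_graphOf_iff_mem_Phi, ← hLA, feasible_map_sigmaSet,
    symmDiff_symmDiff_cancel_right]

theorem seAxiom_nu {L : Submodule (ZMod 2) (V E)} (hL : IsLagrangian L) : SEAxiom (nu L) := by
  intro φ₁ h₁ φ₂ h₂ e he
  obtain ⟨A, hA, hφ⟩ := exists_isSymm_feasible_iff_mem_Phi hL h₁
  rw [symmDiff_comm] at he ⊢
  obtain ⟨e', he', hpair⟩ := exists_pair_mem_Phi hA ((hφ φ₂).1 h₂) he
  refine ⟨e', he', ?_⟩
  change Feasible L _
  rwa [hφ, symmDiff_symmDiff_self']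

/-- `ν_E(L)` is a binary delta-matroid: it equals a twist of the
nondegeneracy set system of a symmetric matrix; in particular it is proper and
satisfies the symmetric exchange axiom. -/
theorem stmt9 (L : Submodule (ZMod 2) (V E)) (hL : IsLagrangian L) :
    (∃ (A : Matrix E E (ZMod 2)) (E' : Finset E), A.IsSymm ∧ nu L = (· ∆ E') '' Phi A) ∧
    (nu L).Nonempty ∧ SEAxiom (nu L) := by
  obtain ⟨Y₀, hY₀⟩ := exists_feasible hL.1
  obtain ⟨A, hA, hφ⟩ := exists_isSymm_feasible_iff_mem_Phi hL hY₀
  refine ⟨⟨A, Y₀, hA, ?_⟩, ⟨Y₀, hY₀⟩, seAxiom_nu hL⟩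
  rw [(symmDiff_left_involutive Y₀).image_eq_preimage_symm]
  ext Y
  exact hφ Y
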